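/- Suppose the bipartite graph H_0 = (L_0, R_0, E_0) has a perfect matching, and let B ⊆ E_0 be such that the bipartite graph (L_0, R_0, E_0 \ B) has no perfect matching. Let G−B denote the gadget graph G with the edges of B deleted. Then EMD_{G−B}(u,v) ≥ (n+4)/(n+3), and hence Ric_{G−B}({u,v}) ≤ −1/(n+3) < 0. -/

import Mathlib

open Finset
open scoped Classical

variable {V : Type*}

/-- The open neighborhood of `u` in `G`, as a finset. -/
noncomputable def nbrF [Fintype V] (G : SimpleGraph V) (u : V) : Finset V :=
  Finset.univ.filter fun x => G.Adj u x

/-- The degree of `u` in `G`. -/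
noncomputable def degG [Fintype V] (G : SimpleGraph V) (u : V) : ℕ := (nbrF G u).card

/-- The closed neighborhood `N[u]` of `u` in `G`. -/
noncomputable def cnbr [Fintype V] (G : SimpleGraph V) (u : V) : Finset V :=
  insert u (nbrF G u)

/-- A transport plan for `(G,u,v)`: nonnegative, with row sums `1/(deg u + 1)` over
`N[u]` and column sums `1/(deg v + 1)` over `N[v]`. -/
def IsPlanG [Fintype V] (G : SimpleGraph V) (u v : V) (z : V → V → ℝ) : Prop :=
  (∀ x y, 0 ≤ z x y) ∧
  (∀ x ∈ cnbr G u, ∑ y ∈ cnbr G v, z x y = 1 / ((degG G u : ℝ) + 1)) ∧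
  (∀ y ∈ cnbr G v, ∑ x ∈ cnbr G u, z x y = 1 / ((degG G v : ℝ) + 1))

/-- The cost of a transport plan, with respect to shortest-path distance in `G`. -/
noncomputable def planCostG [Fintype V] (G : SimpleGraph V) (u v : V) (z : V → V → ℝ) : ℝ :=
  ∑ x ∈ cnbr G u, ∑ y ∈ cnbr G v, (G.dist x y : ℝ) * z x y

/-- The earth mover's distance `EMD_G(u,v)`: the minimum cost of a transport plan. -/
noncomputable def EMDG [Fintype V] (G : SimpleGraph V) (u v : V) : ℝ :=
  sInf {t | ∃ z, IsPlanG G u v z ∧ planCostG G u v z = t}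

/-- The Ollivier–Ricci curvature of the edge `{u,v}`. -/
noncomputable def RicG [Fintype V] (G : SimpleGraph V) (u v : V) : ℝ :=
  1 - EMDG G u v

/-- The five extra vertices `u, v, p, p', x` of the gadget graph. -/
inductive Extra where
  | u | v | p | p' | x
deriving DecidableEq

instance : Fintype Extra where
  elems := {Extra.u, Extra.v, Extra.p, Extra.p', Extra.x}
  complete := by
    intro a
    cases a <;> simp

/-- The vertex set of the gadget graph: `L ⊔ R ⊔ {u,v,p,p',x}`. -/
abbrev GV (L R : Type*) := (L ⊕ R) ⊕ Extra

/-- The base edge relation of the gadget graph built from the bipartite graph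
`H₀ = (L, R, E₀)`: the edge `{u,v}`; `{u,a}` for `a ∈ L`; `{v,b}` for `b ∈ R`;
`{u,p}`; `{v,p'}`; `{p,x}`; `{p',x}`; and `{a,b}` whenever `E₀ a b`. -/
def gadgetRel {L R : Type*} (E0 : L → R → Prop) : GV L R → GV L R → Prop
  | Sum.inr .u, Sum.inr .v => True
  | Sum.inr .u, Sum.inl (Sum.inl _) => True
  | Sum.inr .v, Sum.inl (Sum.inr _) => True
  | Sum.inr .u, Sum.inr .p => True
  | Sum.inr .v, Sum.inr .p' => True
  | Sum.inr .p, Sum.inr .x => True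
  | Sum.inr .p', Sum.inr .x => True
  | Sum.inl (Sum.inl a), Sum.inl (Sum.inr b) => E0 a b
  | _, _ => False

/-- The gadget graph. -/
def gadget {L R : Type*} (E0 : L → R → Prop) : SimpleGraph (GV L R) :=
  SimpleGraph.fromRel (gadgetRel E0)

/-!
Weak Kantorovich duality: a potential `φ` that changes by at most `1` along every edge satisfies
`φ x - φ y ≤ dist x y`, so every transport plan costs at least the mean of `φ` over `N[u]` minus
its mean over `N[v]`. If `E₀ \ B` has no perfect matching, Hall's theorem gives `S ⊆ L₀` whose
neighbourhood `T` has `|T| < |S|`. Take `φ = 1` on `S` and `p`, `φ = -1` on `L₀ \ S`, `v` and `p'`,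
`φ = 0` on `T`, `u` and `x`, and `φ = -2` on `R₀ \ T`; it is admissible because no edge joins `S`
to `R₀ \ T`, and the difference of its means is `(n + 2 + 2 (|S| - |T|)) / (n + 3) ≥ (n + 4) / (n + 3)`.
-/

section Transport

variable {G : SimpleGraph V}

lemma SimpleGraph.Walk.sub_le_length {φ : V → ℝ} (hφ : ∀ x y, G.Adj x y → φ x - φ y ≤ 1)
    {x y : V} (p : G.Walk x y) : φ x - φ y ≤ p.length := by
  induction p with
  | nil => simp
  | cons h p ih =>
    rw [SimpleGraph.Walk.length_cons, Nat.cast_succ]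
    linarith [hφ _ _ h]

lemma sub_le_dist_of_reachable {φ : V → ℝ} (hφ : ∀ x y, G.Adj x y → φ x - φ y ≤ 1)
    {x y : V} (h : G.Reachable x y) : φ x - φ y ≤ G.dist x y := by
  obtain ⟨p, hp⟩ := h.exists_walk_length_eq_dist
  exact hp ▸ p.sub_le_length hφ

variable [Fintype V]

lemma card_cnbr (u : V) : (cnbr G u).card = degG G u + 1 := by
  rw [cnbr, card_insert_of_notMem (by simp [nbrF]), degG]

lemma isPlanG_const (u v : V) :
    IsPlanG G u v fun _ _ => (((degG G u : ℝ) + 1) * ((degG G v : ℝ) + 1))⁻¹ := by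
  refine ⟨fun _ _ => by positivity, fun _ _ => ?_, fun _ _ => ?_⟩ <;>
  · rw [sum_const, nsmul_eq_mul, card_cnbr]
    push_cast
    field_simp

lemma reachable_of_mem_cnbr {u x : V} (hx : x ∈ cnbr G u) : G.Reachable u x := by
  rcases mem_insert.mp hx with rfl | hx
  · rfl
  · exact (mem_filter.mp hx).2.reachable

lemma sub_le_planCostG {φ : V → ℝ} (hφ : ∀ x y, G.Adj x y → φ x - φ y ≤ 1) {u v : V}
    (huv : G.Reachable u v) {z : V → V → ℝ} (hz : IsPlanG G u v z) :
    (∑ x ∈ cnbr G u, φ x) / ((degG G u : ℝ) + 1) - (∑ y ∈ cnbr G v, φ y) / ((degG G v : ℝ) + 1)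
      ≤ planCostG G u v z := by
  obtain ⟨hz0, hrow, hcol⟩ := hz
  have hU : (∑ x ∈ cnbr G u, φ x) / ((degG G u : ℝ) + 1)
      = ∑ x ∈ cnbr G u, φ x * ∑ y ∈ cnbr G v, z x y := by
    rw [div_eq_mul_one_div, sum_mul]
    exact sum_congr rfl fun x hx => by rw [hrow x hx]
  have hV : (∑ y ∈ cnbr G v, φ y) / ((degG G v : ℝ) + 1)
      = ∑ y ∈ cnbr G v, φ y * ∑ x ∈ cnbr G u, z x y := by
    rw [div_eq_mul_one_div, sum_mul]
    exact sum_congr rfl fun y hy => by rw [hcol y hy]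
  rw [hU, hV]
  calc ∑ x ∈ cnbr G u, φ x * ∑ y ∈ cnbr G v, z x y - ∑ y ∈ cnbr G v, φ y * ∑ x ∈ cnbr G u, z x y
    _ = ∑ x ∈ cnbr G u, ∑ y ∈ cnbr G v, (φ x - φ y) * z x y := by
        simp only [sub_mul, sum_sub_distrib, mul_sum]
        rw [sum_comm (s := cnbr G v)]
    _ ≤ planCostG G u v z := by
        refine sum_le_sum fun x hx => sum_le_sum fun y hy => mul_le_mul_of_nonneg_right ?_ (hz0 x y)
        exact sub_le_dist_of_reachable hφ
          ((reachable_of_mem_cnbr hx).symm.trans (huv.trans (reachable_of_mem_cnbr hy)))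

theorem sub_le_EMDG {φ : V → ℝ} (hφ : ∀ x y, G.Adj x y → φ x - φ y ≤ 1) {u v : V}
    (huv : G.Reachable u v) :
    (∑ x ∈ cnbr G u, φ x) / ((degG G u : ℝ) + 1) - (∑ y ∈ cnbr G v, φ y) / ((degG G v : ℝ) + 1)
      ≤ EMDG G u v :=
  le_csInf ⟨_, _, isPlanG_const u v, rfl⟩ fun _ ⟨_, hz, hcost⟩ => hcost ▸ sub_le_planCostG hφ huv hz

end Transport

theorem exists_hall_violator_of_not_exists_equiv {L R : Type*} [Fintype L] [Fintype R]
    (hcard : Fintype.card R ≤ Fintype.card L) (E : L → R → Prop)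
    (hE : ¬ ∃ f : L ≃ R, ∀ a, E a (f a)) :
    ∃ (S : Finset L) (T : Finset R), T.card < S.card ∧ ∀ a ∈ S, ∀ b, E a b → b ∈ T := by
  have hHall : ¬ ∀ S : Finset L, S.card ≤ (S.biUnion fun a => univ.filter (E a)).card := by
    intro hall
    obtain ⟨f, hf_inj, hf⟩ := (all_card_le_biUnion_card_iff_exists_injective _).mp hall
    have hf_bij := (Fintype.bijective_iff_injective_and_card f).mpr
      ⟨hf_inj, le_antisymm (Fintype.card_le_of_injective f hf_inj) hcard⟩
    exact hE ⟨Equiv.ofBijective f hf_bij, fun a => by simpa using hf a⟩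
  simp only [not_forall, not_le] at hHall
  obtain ⟨S, hS⟩ := hHall
  exact ⟨S, _, hS, fun a ha b hab => mem_biUnion.mpr ⟨a, ha, by simpa using hab⟩⟩

lemma sum_ite_mem_const {α : Type*} [Fintype α] (S : Finset α) (c d : ℝ) :
    ∑ a, (if a ∈ S then c else d) = S.card * c + (Fintype.card α - S.card) * d := by
  rw [sum_ite, filter_mem_eq_inter, univ_inter, sum_const, sum_const, filter_notMem_eq_sdiff,
    card_univ_sdiff, nsmul_eq_mul, nsmul_eq_mul, Nat.cast_sub (card_le_univ S)]

section Gadget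

variable {L R : Type*} (E : L → R → Prop)

noncomputable def gadgetPotential (S : Finset L) (T : Finset R) : GV L R → ℝ
  | .inl (.inl a) => if a ∈ S then 1 else -1
  | .inl (.inr b) => if b ∈ T then 0 else -2
  | .inr .u => 0
  | .inr .v => -1
  | .inr .p => 1
  | .inr .p' => -1
  | .inr .x => 0

lemma gadgetPotential_sub_le_one {S : Finset L} {T : Finset R}
    (hST : ∀ a ∈ S, ∀ b, E a b → b ∈ T) (x y : GV L R) (h : (gadget E).Adj x y) :
    gadgetPotential S T x - gadgetPotential S T y ≤ 1 := by
  obtain ⟨-, h | h⟩ := h <;>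
  rcases x with ((a | b) | _ | _ | _ | _ | _) <;> rcases y with ((a' | b') | _ | _ | _ | _ | _) <;>
  simp only [gadgetRel] at h <;> simp only [gadgetPotential] <;> grind

lemma gadget_adj_u_v : (gadget E).Adj (.inr .u) (.inr .v) := by
  simp [gadget, gadgetRel]

variable [Fintype L] [Fintype R]

lemma nbrF_gadget_u : nbrF (gadget E) (.inr .u) =
    insert (.inr .v) (insert (.inr .p) (univ.map (.trans .inl .inl))) := by
  ext ((a | b) | e)
  · simp [nbrF, gadget, gadgetRel]
  · simp [nbrF, gadget, gadgetRel]
  · cases e <;> simp [nbrF, gadget, gadgetRel]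

lemma nbrF_gadget_v : nbrF (gadget E) (.inr .v) =
    insert (.inr .u) (insert (.inr .p') (univ.map (.trans .inr .inl))) := by
  ext ((a | b) | e)
  · simp [nbrF, gadget, gadgetRel]
  · simp [nbrF, gadget, gadgetRel]
  · cases e <;> simp [nbrF, gadget, gadgetRel]

lemma degG_gadget_u : degG (gadget E) (.inr .u) = Fintype.card L + 2 := by
  simp [degG, nbrF_gadget_u]

lemma degG_gadget_v : degG (gadget E) (.inr .v) = Fintype.card R + 2 := by
  simp [degG, nbrF_gadget_v]

lemma sum_cnbr_gadget_u (S : Finset L) (T : Finset R) :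
    ∑ x ∈ cnbr (gadget E) (.inr .u), gadgetPotential S T x = 2 * S.card - Fintype.card L := by
  simp only [cnbr, nbrF_gadget_u, mem_insert, mem_map, Sum.inr.injEq, reduceCtorEq, and_false,
    exists_false, or_self, not_false_eq_true, sum_insert, sum_map, gadgetPotential,
    Function.Embedding.trans_apply, Function.Embedding.inl_apply, sum_ite_mem_const]
  ring

lemma sum_cnbr_gadget_v (S : Finset L) (T : Finset R) :
    ∑ y ∈ cnbr (gadget E) (.inr .v), gadgetPotential S T y =
      2 * T.card - 2 * Fintype.card R - 2 := by
  simp only [cnbr, nbrF_gadget_v, mem_insert, mem_map, Sum.inr.injEq, reduceCtorEq, and_false,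
    exists_false, or_self, not_false_eq_true, sum_insert, sum_map, gadgetPotential,
    Function.Embedding.trans_apply, Function.Embedding.inl_apply, Function.Embedding.inr_apply,
    sum_ite_mem_const]
  ring

end Gadget

theorem stmt15_general {L R : Type*} [Fintype L] [Fintype R] (n : ℕ)
    (hL : Fintype.card L = n) (hR : Fintype.card R = n)
    (E0 : L → R → Prop)
    (B : L → R → Prop)
    (hblock : ¬ ∃ f : L ≃ R, ∀ a : L, E0 a (f a) ∧ ¬ B a (f a)) :
    ((n : ℝ) + 4) / ((n : ℝ) + 3) ≤
        EMDG (gadget (fun a b => E0 a b ∧ ¬ B a b)) (Sum.inr Extra.u) (Sum.inr Extra.v) ∧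
    RicG (gadget (fun a b => E0 a b ∧ ¬ B a b)) (Sum.inr Extra.u) (Sum.inr Extra.v) ≤
        -1 / ((n : ℝ) + 3) ∧
    RicG (gadget (fun a b => E0 a b ∧ ¬ B a b)) (Sum.inr Extra.u) (Sum.inr Extra.v) < 0 := by
  set E : L → R → Prop := fun a b => E0 a b ∧ ¬ B a b
  obtain ⟨S, T, hcard, hST⟩ := exists_hall_violator_of_not_exists_equiv (hR.trans hL.symm).le E hblock
  have hn : (0 : ℝ) < n + 3 := by positivity
  have hEMD : ((n : ℝ) + 4) / (n + 3) ≤ EMDG (gadget E) (.inr .u) (.inr .v) := by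
    refine le_trans ?_ (sub_le_EMDG (gadgetPotential_sub_le_one E hST) (gadget_adj_u_v E).reachable)
    have hcard' : (T.card : ℝ) + 1 ≤ S.card := by exact_mod_cast hcard
    rw [sum_cnbr_gadget_u, sum_cnbr_gadget_v, degG_gadget_u, degG_gadget_v, hL, hR, div_sub_div_same]
    push_cast
    rw [show (n : ℝ) + 2 + 1 = n + 3 by ring, div_le_div_iff_of_pos_right hn]
    linarith
  have hRic : RicG (gadget E) (.inr .u) (.inr .v) ≤ -1 / (n + 3) := by
    have h : 1 - ((n : ℝ) + 4) / (n + 3) = -1 / (n + 3) := by field_simp; ring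
    rw [RicG, ← h]
    linarith
  exact ⟨hEMD, hRic, hRic.trans_lt (div_neg_of_neg_of_pos (by norm_num) hn)⟩

/-- suppose `H₀ = (L,R,E₀)` (with `|L| = |R| = n ≥ 1`) has a perfect
matching and `B ⊆ E₀` is such that `(L,R,E₀ \ B)` has no perfect matching.  Deleting
the edges of `B` from the gadget graph (i.e. forming the gadget graph of `E₀ \ B`)
gives `EMD(u,v) ≥ (n+4)/(n+3)` and hence `Ric({u,v}) ≤ −1/(n+3) < 0`. -/
theorem stmt15 {L R : Type*} [Fintype L] [Fintype R] (n : ℕ) (hn : 1 ≤ n)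
    (hL : Fintype.card L = n) (hR : Fintype.card R = n)
    (E0 : L → R → Prop) (hpm : ∃ f : L ≃ R, ∀ a : L, E0 a (f a))
    (B : L → R → Prop) (hB : ∀ a b, B a b → E0 a b)
    (hblock : ¬ ∃ f : L ≃ R, ∀ a : L, E0 a (f a) ∧ ¬ B a (f a)) :
    ((n : ℝ) + 4) / ((n : ℝ) + 3) ≤
        EMDG (gadget (fun a b => E0 a b ∧ ¬ B a b)) (Sum.inr Extra.u) (Sum.inr Extra.v) ∧
    RicG (gadget (fun a b => E0 a b ∧ ¬ B a b)) (Sum.inr Extra.u) (Sum.inr Extra.v) ≤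
        -1 / ((n : ℝ) + 3) ∧
    RicG (gadget (fun a b => E0 a b ∧ ¬ B a b)) (Sum.inr Extra.u) (Sum.inr Extra.v) < 0 :=
  stmt15_general n hL hR E0 B hblock
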